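/- Let θ ∈ (−1,1] with θ ≠ 0, z_c > 1, a ∈ (0,1), b = (1−a)(z_c−1)^{−θ}, and φ(z) = z_c − (a(z_c−z)^{−θ} + b)^{−1/θ}. Define φ_∞(z) = (1 − (1 − z/z_c)^{−θ})/(1 − (1 − 1/z_c)^{−θ}). Then for all z ∈ [0,1], 1 − φ_∞(φ(z)) = a (1 − φ_∞(z)); moreover φ_∞(0) = 0 and φ_∞(1) = 1. -/

import Mathlib

/-! In the coordinate `u = (zc - z) ^ (-θ)` the map `φ` becomes the affine contraction
`u ↦ a u + (1 - a) u₁` with fixed point `u₁ = (zc - 1) ^ (-θ)`, and `φ_∞` is an affine function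
of `u` vanishing at `z = 0` and equal to `1` at the fixed point `z = 1`. Hence `1 - φ_∞` is
proportional to `u - u₁`, which `φ` multiplies by `a`. -/

open Real

lemma Real.rpow_ne_one_of_ne_zero {x p : ℝ} (hx₀ : 0 < x) (hx₁ : x ≠ 1) (hp : p ≠ 0) :
    x ^ p ≠ 1 := fun h =>
  hp ((rpow_right_inj hx₀ hx₁).1 (h.trans (rpow_zero x).symm))

lemma Real.rpow_neg_one_div_rpow_neg {x θ : ℝ} (hx : 0 ≤ x) (hθ : θ ≠ 0) :
    (x ^ (-1 / θ)) ^ (-θ) = x := by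
  rw [show -1 / θ = (-θ)⁻¹ by rw [neg_div, one_div, inv_neg]]
  exact rpow_inv_rpow hx (neg_ne_zero.2 hθ)

lemma Real.one_sub_div_rpow {c z : ℝ} (hc : 0 < c) (hz : z ≤ c) (p : ℝ) :
    (1 - z / c) ^ p = (c - z) ^ p / c ^ p := by
  rw [one_sub_div hc.ne', div_rpow (sub_nonneg.2 hz) hc.le]

lemma one_sub_normalize_of_affine {u v w a : ℝ} (hw : w ≠ 1) (hv : v = a * u + (1 - a) * w) :
    1 - (1 - v) / (1 - w) = a * (1 - (1 - u) / (1 - w)) := by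
  have : 1 - w ≠ 0 := sub_ne_zero.2 hw.symm
  subst hv
  field_simp
  ring

lemma rpow_neg_one_sub_div_schroder {θ zc a z : ℝ} (hθ : θ ≠ 0) (hzc : 1 < zc)
    (ha₀ : 0 ≤ a) (ha₁ : a ≤ 1) (hz : z ≤ 1) :
    (1 - (zc - (a * (zc - z) ^ (-θ) + (1 - a) * (zc - 1) ^ (-θ)) ^ (-1 / θ)) / zc) ^ (-θ)
      = a * (1 - z / zc) ^ (-θ) + (1 - a) * (1 - 1 / zc) ^ (-θ) := by
  have hzc₀ : 0 < zc := one_pos.trans hzc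
  set A := a * (zc - z) ^ (-θ) + (1 - a) * (zc - 1) ^ (-θ)
  have hA : 0 ≤ A := by
    have := rpow_nonneg (sub_nonneg.2 (hz.trans hzc.le)) (-θ)
    have := rpow_nonneg (sub_nonneg.2 hzc.le) (-θ)
    have := sub_nonneg.2 ha₁
    positivity
  have hφ : 1 - (zc - A ^ (-1 / θ)) / zc = A ^ (-1 / θ) / zc := by
    field_simp
    ring
  rw [hφ, div_rpow (rpow_nonneg hA _) hzc₀.le, rpow_neg_one_div_rpow_neg hA hθ,
    one_sub_div_rpow hzc₀ (hz.trans hzc.le), one_sub_div_rpow hzc₀ hzc.le]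
  ring

theorem schroder_subcritical_zc_general
    (θ zc a : ℝ) (hθ0 : θ ≠ 0)
    (hzc : 1 < zc) (ha0 : 0 < a) (ha1 : a < 1) :
    let b : ℝ := (1 - a) * (zc - 1) ^ (-θ)
    let φ : ℝ → ℝ := fun z => zc - (a * (zc - z) ^ (-θ) + b) ^ (-1 / θ)
    let φinf : ℝ → ℝ := fun z =>
      (1 - (1 - z / zc) ^ (-θ)) / (1 - (1 - 1 / zc) ^ (-θ))
    (∀ z ∈ Set.Icc (0 : ℝ) 1, 1 - φinf (φ z) = a * (1 - φinf z)) ∧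
      φinf 0 = 0 ∧ φinf 1 = 1 := by
  intro b φ φinf
  have hzc₀ : 0 < zc := one_pos.trans hzc
  have hw : (1 - 1 / zc) ^ (-θ) ≠ 1 := by
    refine rpow_ne_one_of_ne_zero ?_ ?_ (neg_ne_zero.2 hθ0)
    · simpa [one_div] using inv_lt_one_of_one_lt₀ hzc
    · simpa using hzc₀.ne'
  refine ⟨fun z hz => ?_, by simp [φinf], div_self (sub_ne_zero.2 hw.symm)⟩
  exact one_sub_normalize_of_affine hw
    (rpow_neg_one_sub_div_schroder hθ0 hzc ha0.le ha1.le hz.2)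

theorem schroder_subcritical_zc
    (θ zc a : ℝ) (hθl : -1 < θ) (hθr : θ ≤ 1) (hθ0 : θ ≠ 0)
    (hzc : 1 < zc) (ha0 : 0 < a) (ha1 : a < 1) :
    let b : ℝ := (1 - a) * (zc - 1) ^ (-θ)
    let φ : ℝ → ℝ := fun z => zc - (a * (zc - z) ^ (-θ) + b) ^ (-1 / θ)
    let φinf : ℝ → ℝ := fun z =>
      (1 - (1 - z / zc) ^ (-θ)) / (1 - (1 - 1 / zc) ^ (-θ))
    (∀ z ∈ Set.Icc (0 : ℝ) 1, 1 - φinf (φ z) = a * (1 - φinf z)) ∧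
      φinf 0 = 0 ∧ φinf 1 = 1 :=
  schroder_subcritical_zc_general θ zc a hθ0 hzc ha0 ha1
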